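/- Let π be a permutation matrix of length k ≥ 1 with 90-degree counterclockwise rotation π', and let n = 4k²·n' for a positive integer n'. Then ex(n,π) ≤ (2k−1)² · ex(n/(4k²), π) + 4nk² · f(4k²,π) + 4nk² · f(4k²,π'). -/
import Mathlib


/-- Matrices are written column-first: `M i j` is the entry in column `i` and row `j`
(rows ordered bottom-to-top). `M` contains the pattern `P` if there are strictly
increasing sequences of columns and of rows of `M` hitting a 1-entry of `M`
wherever `P` has a 1-entry. -/
def contains {c r a b : ℕ} (M : Fin c → Fin r → Bool) (P : Fin a → Fin b → Bool) : Prop :=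
  ∃ (ci : Fin a → Fin c) (ri : Fin b → Fin r),
    StrictMono ci ∧ StrictMono ri ∧ ∀ i j, P i j = true → M (ci i) (ri j) = true

def avoids {c r a b : ℕ} (M : Fin c → Fin r → Bool) (P : Fin a → Fin b → Bool) : Prop :=
  ¬ contains M P

/-- The number of 1-entries of a 0/1 matrix. -/
def ones {c r : ℕ} (M : Fin c → Fin r → Bool) : ℕ :=
  (Finset.univ.filter (fun p : Fin c × Fin r => M p.1 p.2 = true)).card

/-- A permutation matrix of length `k`: exactly one 1-entry in each row and column. -/
def isPermMat {k : ℕ} (P : Fin k → Fin k → Bool) : Prop :=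
  ∃ σ : Equiv.Perm (Fin k), ∀ i j, P i j = true ↔ σ i = j

/-- `exRC r c P`: the maximum number of 1-entries in a 0/1 matrix with `r` rows and
`c` columns avoiding `P`. -/
noncomputable def exRC (r c : ℕ) {a b : ℕ} (P : Fin a → Fin b → Bool) : ℕ :=
  sSup { m | ∃ M : Fin c → Fin r → Bool, avoids M P ∧ ones M = m }

/-- `exN n P`: the maximum number of 1-entries in an `n × n` 0/1 matrix avoiding `P`. -/
noncomputable def exN (n : ℕ) {a b : ℕ} (P : Fin a → Fin b → Bool) : ℕ := exRC n n P

/-- `fExt c P` for a length-`k` permutation matrix `P`: the maximum number `r` of rows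
of a 0/1 matrix with `r` rows and `c` columns avoiding `P` in which every row has at
least `2k` 1-entries. -/
noncomputable def fExt (c : ℕ) {k : ℕ} (P : Fin k → Fin k → Bool) : ℕ :=
  sSup { r | ∃ M : Fin c → Fin r → Bool, avoids M P ∧
    ∀ j : Fin r, 2 * k ≤ (Finset.univ.filter (fun i : Fin c => M i j = true)).card }

/-- Rotation by 90 degrees counterclockwise. -/
def rot90 {k : ℕ} (P : Fin k → Fin k → Bool) : Fin k → Fin k → Bool :=
  fun i j => P j i.rev

/-- `isDleft P Q`: `Q` is obtained from `P` by deleting the leftmost column together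
with the row containing that column's 1-entry. -/
def isDleft {k : ℕ} (P : Fin (k+1) → Fin (k+1) → Bool) (Q : Fin k → Fin k → Bool) : Prop :=
  ∃ r0 : Fin (k+1), P 0 r0 = true ∧ ∀ i j, Q i j = P i.succ (r0.succAbove j)

/-- `isDright P Q`: `Q` is obtained from `P` by deleting the rightmost column together
with the row containing that column's 1-entry. -/
def isDright {k : ℕ} (P : Fin (k+1) → Fin (k+1) → Bool) (Q : Fin k → Fin k → Bool) : Prop :=
  ∃ r0 : Fin (k+1), P (Fin.last k) r0 = true ∧ ∀ i j, Q i j = P i.castSucc (r0.succAbove j)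

/-- The global index of the `a`-th column (resp. row) inside the `i`-th group of `s`
consecutive columns (resp. rows). -/
def blockIdx {s n' : ℕ} (i : Fin n') (a : Fin s) : Fin (s * n') :=
  ⟨i.1 * s + a.1, by
    have ha := a.2
    have hi : i.1 + 1 ≤ n' := i.2
    have h1 : (i.1 + 1) * s ≤ n' * s := Nat.mul_le_mul hi (le_refl s)
    have h2 : (i.1 + 1) * s = i.1 * s + s := Nat.succ_mul _ _
    have h3 : n' * s = s * n' := Nat.mul_comm _ _
    omega⟩


open Finset


lemma blockIdx_lt {s n' : ℕ} {i i' : Fin n'} (h : i < i') (a a' : Fin s) :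
    blockIdx i a < blockIdx i' a' := by
  have ha := a.2
  have h1 : (i.1 + 1) * s ≤ i'.1 * s := Nat.mul_le_mul h (le_refl s)
  have h2 : (i.1 + 1) * s = i.1 * s + s := Nat.succ_mul _ _
  simp only [blockIdx, Fin.mk_lt_mk]
  omega

lemma blockIdx_lt_same {s n' : ℕ} (i : Fin n') {a a' : Fin s} (h : a < a') :
    blockIdx i a < blockIdx i a' := by
  simp only [blockIdx, Fin.mk_lt_mk]
  exact Nat.add_lt_add_left h _

def blockEquiv (s n' : ℕ) (hs : 0 < s) : Fin n' × Fin s ≃ Fin (s * n') where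
  toFun p := blockIdx p.1 p.2
  invFun x := (⟨x.1 / s, by
      have h2 := x.2
      have h3 : s * n' = n' * s := Nat.mul_comm _ _
      exact (Nat.div_lt_iff_lt_mul hs).2 (by omega)⟩,
    ⟨x.1 % s, Nat.mod_lt _ hs⟩)
  left_inv p := by
    ext
    · show (p.1.1 * s + p.2.1) / s = p.1.1
      rw [Nat.add_comm, Nat.add_mul_div_right _ _ hs, Nat.div_eq_of_lt p.2.2, Nat.zero_add]
    · show (p.1.1 * s + p.2.1) % s = p.2.1
      rw [Nat.add_comm, Nat.add_mul_mod_self_right, Nat.mod_eq_of_lt p.2.2]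
  right_inv x := by
    ext
    show x.1 / s * s + x.1 % s = x.1
    rw [Nat.mul_comm]
    exact Nat.div_add_mod _ _

lemma contains_of_perm {k C R : ℕ} {M : Fin C → Fin R → Bool} {P : Fin k → Fin k → Bool}
    (σ : Equiv.Perm (Fin k)) (hσ : ∀ i j, P i j = true ↔ σ i = j)
    (ci : Fin k → Fin C) (ri : Fin k → Fin R)
    (hci : StrictMono ci) (hri : StrictMono ri)
    (h : ∀ p, M (ci p) (ri (σ p)) = true) : contains M P :=
  ⟨ci, ri, hci, hri, fun p q hpq => by rw [← (hσ p q).1 hpq]; exact h p⟩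

lemma contains_of_allOnes {C R a b : ℕ} {M : Fin C → Fin R → Bool}
    (P : Fin a → Fin b → Bool)
    (f : Fin a → Fin C) (g : Fin b → Fin R) (hf : StrictMono f) (hg : StrictMono g)
    (h : ∀ p q, M (f p) (g q) = true) : contains M P :=
  ⟨f, g, hf, hg, fun p q _ => h p q⟩

lemma ones_le {c r : ℕ} (M : Fin c → Fin r → Bool) : ones M ≤ c * r := by
  calc ones M ≤ (univ : Finset (Fin c × Fin r)).card := card_filter_le _ _
  _ = c * r := by simp

lemma avoids_zero {c r a b : ℕ} {P : Fin a → Fin b → Bool}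
    (i0 : Fin a) (j0 : Fin b) (h1 : P i0 j0 = true) :
    avoids (fun (_ : Fin c) (_ : Fin r) => false) P := by
  rintro ⟨ci, ri, _, _, h⟩
  simpa using h i0 j0 h1

lemma le_exRC {r c a b : ℕ} {P : Fin a → Fin b → Bool} (M : Fin c → Fin r → Bool)
    (hM : avoids M P) : ones M ≤ exRC r c P :=
  le_csSup ⟨c * r, fun m ⟨M', _, e⟩ => e ▸ ones_le M'⟩ ⟨M, hM, rfl⟩

lemma exRC_le {r c a b : ℕ} {P : Fin a → Fin b → Bool} {B : ℕ}
    (i0 : Fin a) (j0 : Fin b) (h1 : P i0 j0 = true)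
    (hB : ∀ M : Fin c → Fin r → Bool, avoids M P → ones M ≤ B) : exRC r c P ≤ B :=
  csSup_le ⟨0, fun _ _ => false, avoids_zero i0 j0 h1, by simp [ones]⟩
    (fun m ⟨M, hM, e⟩ => e ▸ hB M hM)

lemma rows_bound {c k r : ℕ} (hk : 1 ≤ k) (P : Fin k → Fin k → Bool)
    (M : Fin c → Fin r → Bool) (hav : avoids M P)
    (hrows : ∀ j : Fin r, 2 * k ≤ (univ.filter (fun i : Fin c => M i j = true)).card) :
    r ≤ k * c.choose k := by
  by_contra hlt
  push_neg at hlt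
  -- choose a k-subset of the ones of each row
  have hch : ∀ j : Fin r, ∃ T ⊆ univ.filter (fun i : Fin c => M i j = true), T.card = k := by
    intro j
    exact Finset.exists_subset_card_eq (le_trans (by omega) (hrows j))
  choose T hTsub hTcard using hch
  have hmaps : ∀ j ∈ (univ : Finset (Fin r)), T j ∈ (univ : Finset (Fin c)).powersetCard k := by
    intro j _
    exact Finset.mem_powersetCard.2 ⟨subset_univ _, hTcard j⟩
  have hcardlt : ((univ : Finset (Fin c)).powersetCard k).card * (k - 1) <
      (univ : Finset (Fin r)).card := by
    rw [Finset.card_powersetCard, Finset.card_univ, Fintype.card_fin, Finset.card_univ,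
      Fintype.card_fin]
    calc c.choose k * (k - 1) ≤ c.choose k * k := Nat.mul_le_mul_left _ (by omega)
    _ = k * c.choose k := Nat.mul_comm _ _
    _ < r := hlt
  obtain ⟨S, hSmem, hfib⟩ :=
    Finset.exists_lt_card_fiber_of_mul_lt_card_of_maps_to hmaps hcardlt
  have hScard : S.card = k := (Finset.mem_powersetCard.1 hSmem).2
  have hfib' : k ≤ ((univ : Finset (Fin r)).filter (fun j => T j = S)).card := by omega
  obtain ⟨F, hFsub, hFcard⟩ := Finset.exists_subset_card_eq hfib'
  -- order isos
  have eS := S.orderIsoOfFin hScard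
  have eF := F.orderIsoOfFin hFcard
  apply hav
  apply contains_of_allOnes P (fun p => (eS p : Fin c)) (fun q => (eF q : Fin r))
  · intro p q h
    exact (eS.lt_iff_lt.2 h : (eS p : {x // x ∈ S}) < eS q)
  · intro p q h
    exact (eF.lt_iff_lt.2 h : (eF q : {x // x ∈ F}) > eF p)
  · intro p q
    have hqF : (eF q : Fin r) ∈ F := (eF q).2
    have hq : T (eF q : Fin r) = S := (Finset.mem_filter.1 (hFsub hqF)).2
    have hpS : (eS p : Fin c) ∈ T (eF q : Fin r) := by rw [hq]; exact (eS p).2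
    have := hTsub (eF q : Fin r) hpS
    exact (Finset.mem_filter.1 this).2

lemma fExt_bddAbove (c : ℕ) {k : ℕ} (hk : 1 ≤ k) (P : Fin k → Fin k → Bool) :
    BddAbove { r | ∃ M : Fin c → Fin r → Bool, avoids M P ∧
      ∀ j : Fin r, 2 * k ≤ (Finset.univ.filter (fun i : Fin c => M i j = true)).card } :=
  ⟨k * c.choose k, fun r ⟨M, hav, hrows⟩ => rows_bound hk P M hav hrows⟩

lemma le_fExt {c k r : ℕ} (hk : 1 ≤ k) {P : Fin k → Fin k → Bool}
    (M : Fin c → Fin r → Bool) (hav : avoids M P)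
    (hrows : ∀ j : Fin r, 2 * k ≤ (univ.filter (fun i : Fin c => M i j = true)).card) :
    r ≤ fExt c P :=
  le_csSup (fExt_bddAbove c hk P) ⟨M, hav, hrows⟩

section Blocks
variable {s n' : ℕ}

def colS (M : Fin (s * n') → Fin (s * n') → Bool) (i j : Fin n') : Finset (Fin s) :=
  univ.filter (fun a => ∃ b : Fin s, M (blockIdx i a) (blockIdx j b) = true)

def rowS (M : Fin (s * n') → Fin (s * n') → Bool) (i j : Fin n') : Finset (Fin s) :=
  univ.filter (fun b => ∃ a : Fin s, M (blockIdx i a) (blockIdx j b) = true)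

def bOnes (M : Fin (s * n') → Fin (s * n') → Bool) (i j : Fin n') : ℕ :=
  (univ.filter (fun ab : Fin s × Fin s =>
    M (blockIdx i ab.1) (blockIdx j ab.2) = true)).card

lemma bOnes_le_colS_mul_rowS (M : Fin (s * n') → Fin (s * n') → Bool) (i j : Fin n') :
    bOnes M i j ≤ (colS M i j).card * (rowS M i j).card := by
  rw [← Finset.card_product]
  apply Finset.card_le_card
  intro ab hab
  have h := (Finset.mem_filter.1 hab).2
  exact Finset.mem_product.2 ⟨Finset.mem_filter.2 ⟨mem_univ _, ⟨ab.2, h⟩⟩,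
    Finset.mem_filter.2 ⟨mem_univ _, ⟨ab.1, h⟩⟩⟩

lemma bOnes_le_sq (M : Fin (s * n') → Fin (s * n') → Bool) (i j : Fin n') :
    bOnes M i j ≤ s * s :=
  le_trans (bOnes_le_colS_mul_rowS M i j)
    (Nat.mul_le_mul (le_trans (card_le_univ _) (by simp)) (le_trans (card_le_univ _) (by simp)))

lemma sum_bOnes (hs : 0 < s) (M : Fin (s * n') → Fin (s * n') → Bool) :
    ∑ ij : Fin n' × Fin n', bOnes M ij.1 ij.2 = ones M := by
  classical
  have : ones M = ∑ p : Fin (s * n') × Fin (s * n'), (if M p.1 p.2 = true then 1 else 0) := by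
    rw [ones, Finset.card_filter]
  rw [this]
  have := Equiv.sum_comp ((blockEquiv s n' hs).prodCongr (blockEquiv s n' hs))
    (fun p : Fin (s * n') × Fin (s * n') => (if M p.1 p.2 = true then 1 else 0))
  rw [← this]
  have hL : ∀ ij : Fin n' × Fin n', bOnes M ij.1 ij.2
      = ∑ ab : Fin s × Fin s, (if M (blockIdx ij.1 ab.1) (blockIdx ij.2 ab.2) = true
          then 1 else 0) := by
    intro ij; rw [bOnes, Finset.card_filter]
  simp only [hL]
  simp only [Fintype.sum_prod_type, Equiv.prodCongr_apply, Prod.map, blockEquiv,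
    Equiv.coe_fn_mk]
  exact Finset.sum_congr rfl (fun i _ => Finset.sum_comm)

variable {k : ℕ}

lemma avoids_contraction {M : Fin (s * n') → Fin (s * n') → Bool}
    {π : Fin k → Fin k → Bool} (σ : Equiv.Perm (Fin k)) (hσ : ∀ i j, π i j = true ↔ σ i = j)
    (hM : avoids M π) :
    avoids (fun i j : Fin n' =>
      decide (∃ a b : Fin s, M (blockIdx i a) (blockIdx j b) = true)) π := by
  rintro ⟨ci, ri, hci, hri, h⟩
  have hw : ∀ p : Fin k, ∃ a b : Fin s,
      M (blockIdx (ci p) a) (blockIdx (ri (σ p)) b) = true := by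
    intro p
    have := h p (σ p) ((hσ p (σ p)).2 rfl)
    exact of_decide_eq_true this
  choose a b hab using hw
  apply hM
  apply contains_of_perm σ hσ (fun p => blockIdx (ci p) (a p))
    (fun q => blockIdx (ri q) (b (σ.symm q)))
  · exact fun p q hpq => blockIdx_lt (hci hpq) _ _
  · exact fun p q hpq => blockIdx_lt (hri hpq) _ _
  · intro p
    have : σ.symm (σ p) = p := σ.symm_apply_apply p
    rw [this]
    exact hab p

lemma wide_count (hk : 1 ≤ k) {M : Fin (s * n') → Fin (s * n') → Bool}
    {π : Fin k → Fin k → Bool} (σ : Equiv.Perm (Fin k)) (hσ : ∀ i j, π i j = true ↔ σ i = j)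
    (hM : avoids M π) (i : Fin n') :
    (univ.filter (fun j : Fin n' => 2 * k ≤ (colS M i j).card)).card ≤ fExt s π := by
  classical
  set W := univ.filter (fun j : Fin n' => 2 * k ≤ (colS M i j).card) with hW
  set e := W.orderIsoOfFin rfl with he
  set N : Fin s → Fin W.card → Bool :=
    fun a t => decide (∃ b : Fin s, M (blockIdx i a) (blockIdx (e t : Fin n') b) = true)
    with hN
  apply le_fExt hk N
  · rintro ⟨ci, ri, hci, hri, h⟩
    have hw : ∀ p : Fin k, ∃ b : Fin s,
        M (blockIdx i (ci p)) (blockIdx (e (ri (σ p)) : Fin n') b) = true := by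
      intro p
      exact of_decide_eq_true (h p (σ p) ((hσ p (σ p)).2 rfl))
    choose b hb using hw
    apply hM
    apply contains_of_perm σ hσ (fun p => blockIdx i (ci p))
      (fun q => blockIdx (e (ri q) : Fin n') (b (σ.symm q)))
    · exact fun p q hpq => blockIdx_lt_same i (hci hpq)
    · intro p q hpq
      have : (e (ri p) : Fin n') < (e (ri q) : Fin n') := e.lt_iff_lt.2 (hri hpq)
      exact blockIdx_lt this _ _
    · intro p
      rw [σ.symm_apply_apply p]
      exact hb p
  · intro t
    have hmem : (e t : Fin n') ∈ W := (e t).2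
    have h2k : 2 * k ≤ (colS M i (e t : Fin n')).card := (Finset.mem_filter.1 hmem).2
    have heq : univ.filter (fun a : Fin s => N a t = true) = colS M i (e t : Fin n') := by
      ext a
      simp only [Finset.mem_filter, mem_univ, true_and, hN, decide_eq_true_eq, colS]
    rw [heq]
    exact h2k

lemma tall_count (hk : 1 ≤ k) {M : Fin (s * n') → Fin (s * n') → Bool}
    {π : Fin k → Fin k → Bool} (σ : Equiv.Perm (Fin k)) (hσ : ∀ i j, π i j = true ↔ σ i = j)
    (hM : avoids M π) (j : Fin n') :
    (univ.filter (fun i : Fin n' => 2 * k ≤ (rowS M i j).card)).card ≤ fExt s (rot90 π) := by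
  classical
  set W := univ.filter (fun i : Fin n' => 2 * k ≤ (rowS M i j).card) with hW
  set e := W.orderIsoOfFin rfl with he
  set N : Fin s → Fin W.card → Bool :=
    fun bc t => decide (∃ a : Fin s, M (blockIdx (e t : Fin n') a) (blockIdx j bc.rev) = true)
    with hN
  apply le_fExt hk N
  · rintro ⟨ci, ri, hci, hri, h⟩
    have hw : ∀ p : Fin k, ∃ a : Fin s,
        M (blockIdx (e (ri p) : Fin n') a) (blockIdx j (ci ((σ p).rev)).rev) = true := by
      intro p
      have hrot : rot90 π ((σ p).rev) p = true := by
        rw [rot90, Fin.rev_rev]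
        exact (hσ p (σ p)).2 rfl
      exact of_decide_eq_true (h ((σ p).rev) p hrot)
    choose a ha using hw
    apply hM
    apply contains_of_perm σ hσ (fun p => blockIdx (e (ri p) : Fin n') (a p))
      (fun q => blockIdx j (ci q.rev).rev)
    · intro p q hpq
      have : (e (ri p) : Fin n') < (e (ri q) : Fin n') := e.lt_iff_lt.2 (hri hpq)
      exact blockIdx_lt this _ _
    · intro p q hpq
      apply blockIdx_lt_same
      exact Fin.rev_lt_rev.2 (hci (Fin.rev_lt_rev.2 hpq))
    · intro p
      exact ha p
  · intro t
    have hmem : (e t : Fin n') ∈ W := (e t).2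
    have h2k : 2 * k ≤ (rowS M (e t : Fin n') j).card := (Finset.mem_filter.1 hmem).2
    have heq : (univ.filter (fun bc : Fin s => N bc t = true)).card
        = (rowS M (e t : Fin n') j).card := by
      apply Finset.card_bij (fun bc _ => bc.rev)
      · intro bc hbc
        have := (Finset.mem_filter.1 hbc).2
        simp only [hN, decide_eq_true_eq] at this
        exact Finset.mem_filter.2 ⟨mem_univ _, this⟩
      · intro x _ y _ hxy
        have := congrArg Fin.rev hxy
        rwa [Fin.rev_rev, Fin.rev_rev] at this
      · intro bc hbc
        refine ⟨bc.rev, ?_, Fin.rev_rev bc⟩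
        have := (Finset.mem_filter.1 hbc).2
        apply Finset.mem_filter.2
        refine ⟨mem_univ _, ?_⟩
        simp only [hN, decide_eq_true_eq, Fin.rev_rev]
        exact this
    rw [heq]
    exact h2k

end Blocks

lemma filter_fst_card_le {n' : ℕ} (q : Fin n' → Fin n' → Prop) [DecidablePred fun ij : Fin n' × Fin n' => q ij.1 ij.2]
    [∀ i j, Decidable (q i j)] (i : Fin n') :
    ((univ.filter (fun ij : Fin n' × Fin n' => q ij.1 ij.2)).filter (fun ij => ij.1 = i)).card
      ≤ (univ.filter (fun j : Fin n' => q i j)).card := by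
  apply Finset.card_le_card_of_injOn Prod.snd
  · intro ij hij
    obtain ⟨h1, h2⟩ := Finset.mem_filter.1 hij
    have hp := (Finset.mem_filter.1 h1).2
    apply Finset.mem_filter.2
    refine ⟨mem_univ _, ?_⟩
    rwa [← h2]
  · intro x hx y hy hxy
    have hx2 := (Finset.mem_filter.1 hx).2
    have hy2 := (Finset.mem_filter.1 hy).2
    exact Prod.ext (hx2.trans hy2.symm) hxy

lemma filter_snd_card_le {n' : ℕ} (q : Fin n' → Fin n' → Prop) [DecidablePred fun ij : Fin n' × Fin n' => q ij.1 ij.2]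
    [∀ i j, Decidable (q i j)] (j : Fin n') :
    ((univ.filter (fun ij : Fin n' × Fin n' => q ij.1 ij.2)).filter (fun ij => ij.2 = j)).card
      ≤ (univ.filter (fun i : Fin n' => q i j)).card := by
  apply Finset.card_le_card_of_injOn Prod.fst
  · intro ij hij
    obtain ⟨h1, h2⟩ := Finset.mem_filter.1 hij
    have hp := (Finset.mem_filter.1 h1).2
    apply Finset.mem_filter.2
    refine ⟨mem_univ _, ?_⟩
    rwa [← h2]
  · intro x hx y hy hxy
    have hx2 := (Finset.mem_filter.1 hx).2
    have hy2 := (Finset.mem_filter.1 hy).2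
    exact Prod.ext hxy (hx2.trans hy2.symm)

lemma main_bound {k s n' : ℕ} (hk : 1 ≤ k) (hs : 0 < s)
    {π : Fin k → Fin k → Bool} (σ : Equiv.Perm (Fin k)) (hσ : ∀ i j, π i j = true ↔ σ i = j)
    (M : Fin (s * n') → Fin (s * n') → Bool) (hM : avoids M π) :
    ones M ≤ (2 * k - 1) ^ 2 * exN n' π + n' * (s * s) * fExt s π
      + n' * (s * s) * fExt s (rot90 π) := by
  classical
  rw [← sum_bOnes hs M]
  -- generic bound on a filtered sum
  have hgen : ∀ (S : Finset (Fin n' × Fin n')) (F : ℕ),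
      (∀ i : Fin n', (S.filter (fun ij => ij.1 = i)).card ≤ F) →
      (∀ i : Fin n', (S.filter (fun ij => ij.2 = i)).card ≤ F) = True →
      True := fun _ _ _ _ => trivial
  clear hgen
  have hA : ∑ ij ∈ univ.filter (fun ij : Fin n' × Fin n' => 2 * k ≤ (colS M ij.1 ij.2).card),
      bOnes M ij.1 ij.2 ≤ n' * (s * s) * fExt s π := by
    set S := univ.filter (fun ij : Fin n' × Fin n' => 2 * k ≤ (colS M ij.1 ij.2).card) with hS
    have h2 := Finset.sum_le_card_nsmul S (fun ij => bOnes M ij.1 ij.2) (s * s)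
      (fun ij _ => bOnes_le_sq M ij.1 ij.2)
    rw [smul_eq_mul] at h2
    have h3 : S.card ≤ n' * fExt s π := by
      rw [Finset.card_eq_sum_card_fiberwise (f := Prod.fst) (t := univ)
        (fun x _ => mem_univ x.1)]
      have h4 : ∀ i : Fin n', (S.filter (fun ij => ij.1 = i)).card ≤ fExt s π := by
        intro i
        refine le_trans (filter_fst_card_le (fun i j => 2 * k ≤ (colS M i j).card) i) ?_
        exact wide_count hk σ hσ hM i
      calc ∑ i : Fin n', (S.filter (fun ij => ij.1 = i)).card
          ≤ ∑ _i : Fin n', fExt s π := Finset.sum_le_sum (fun i _ => h4 i)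
        _ = n' * fExt s π := by simp [mul_comm]
    calc ∑ ij ∈ S, bOnes M ij.1 ij.2 ≤ S.card * (s * s) := h2
      _ ≤ (n' * fExt s π) * (s * s) := Nat.mul_le_mul_right _ h3
      _ = n' * (s * s) * fExt s π := by ring
  have hB : ∑ ij ∈ univ.filter (fun ij : Fin n' × Fin n' => 2 * k ≤ (rowS M ij.1 ij.2).card),
      bOnes M ij.1 ij.2 ≤ n' * (s * s) * fExt s (rot90 π) := by
    set S := univ.filter (fun ij : Fin n' × Fin n' => 2 * k ≤ (rowS M ij.1 ij.2).card) with hS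
    have h2 := Finset.sum_le_card_nsmul S (fun ij => bOnes M ij.1 ij.2) (s * s)
      (fun ij _ => bOnes_le_sq M ij.1 ij.2)
    rw [smul_eq_mul] at h2
    have h3 : S.card ≤ n' * fExt s (rot90 π) := by
      rw [Finset.card_eq_sum_card_fiberwise (f := Prod.snd) (t := univ)
        (fun x _ => mem_univ x.2)]
      have h4 : ∀ j : Fin n', (S.filter (fun ij => ij.2 = j)).card ≤ fExt s (rot90 π) := by
        intro j
        refine le_trans (filter_snd_card_le (fun i j => 2 * k ≤ (rowS M i j).card) j) ?_
        exact tall_count hk σ hσ hM j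
      calc ∑ j : Fin n', (S.filter (fun ij => ij.2 = j)).card
          ≤ ∑ _j : Fin n', fExt s (rot90 π) := Finset.sum_le_sum (fun j _ => h4 j)
        _ = n' * fExt s (rot90 π) := by simp [mul_comm]
    calc ∑ ij ∈ S, bOnes M ij.1 ij.2 ≤ S.card * (s * s) := h2
      _ ≤ (n' * fExt s (rot90 π)) * (s * s) := Nat.mul_le_mul_right _ h3
      _ = n' * (s * s) * fExt s (rot90 π) := by ring
  -- small blocks
  set NB : Fin n' → Fin n' → Bool :=
    fun i j => decide (∃ a b : Fin s, M (blockIdx i a) (blockIdx j b) = true) with hNB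
  have hC : ∑ ij ∈ (univ.filter
        (fun ij : Fin n' × Fin n' => ¬ 2 * k ≤ (colS M ij.1 ij.2).card)).filter
        (fun ij => ¬ 2 * k ≤ (rowS M ij.1 ij.2).card),
      bOnes M ij.1 ij.2 ≤ (2 * k - 1) ^ 2 * exN n' π := by
    have hpt : ∀ ij ∈ (univ.filter
        (fun ij : Fin n' × Fin n' => ¬ 2 * k ≤ (colS M ij.1 ij.2).card)).filter
        (fun ij => ¬ 2 * k ≤ (rowS M ij.1 ij.2).card),
        bOnes M ij.1 ij.2 ≤ (2 * k - 1) ^ 2 * (if NB ij.1 ij.2 = true then 1 else 0) := by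
      intro ij hij
      obtain ⟨h1, hnT⟩ := Finset.mem_filter.1 hij
      have hnW := (Finset.mem_filter.1 h1).2
      by_cases hne : NB ij.1 ij.2 = true
      · rw [if_pos hne, mul_one]
        have hc : (colS M ij.1 ij.2).card ≤ 2 * k - 1 := by omega
        have hr : (rowS M ij.1 ij.2).card ≤ 2 * k - 1 := by omega
        calc bOnes M ij.1 ij.2 ≤ (colS M ij.1 ij.2).card * (rowS M ij.1 ij.2).card :=
              bOnes_le_colS_mul_rowS M ij.1 ij.2
          _ ≤ (2 * k - 1) * (2 * k - 1) := Nat.mul_le_mul hc hr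
          _ = (2 * k - 1) ^ 2 := (sq _).symm
      · rw [if_neg hne, mul_zero, Nat.le_zero, bOnes, Finset.card_eq_zero]
        apply Finset.filter_eq_empty_iff.2
        intro ab _ habs
        apply hne
        simp only [hNB, decide_eq_true_eq]
        exact ⟨ab.1, ab.2, habs⟩
    calc ∑ ij ∈ (univ.filter
          (fun ij : Fin n' × Fin n' => ¬ 2 * k ≤ (colS M ij.1 ij.2).card)).filter
          (fun ij => ¬ 2 * k ≤ (rowS M ij.1 ij.2).card), bOnes M ij.1 ij.2
        ≤ ∑ ij ∈ (univ.filter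
          (fun ij : Fin n' × Fin n' => ¬ 2 * k ≤ (colS M ij.1 ij.2).card)).filter
          (fun ij => ¬ 2 * k ≤ (rowS M ij.1 ij.2).card),
            (2 * k - 1) ^ 2 * (if NB ij.1 ij.2 = true then 1 else 0) :=
          Finset.sum_le_sum hpt
      _ ≤ ∑ ij : Fin n' × Fin n',
            (2 * k - 1) ^ 2 * (if NB ij.1 ij.2 = true then 1 else 0) :=
          Finset.sum_le_sum_of_subset (Finset.subset_univ _)
      _ = (2 * k - 1) ^ 2 * ∑ ij : Fin n' × Fin n',
            (if NB ij.1 ij.2 = true then 1 else 0) := by rw [Finset.mul_sum]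
      _ = (2 * k - 1) ^ 2 * ones NB := by rw [ones, Finset.card_filter]
      _ ≤ (2 * k - 1) ^ 2 * exN n' π := by
          apply Nat.mul_le_mul_left
          exact le_exRC NB (avoids_contraction σ hσ hM)
  -- combine
  rw [← Finset.sum_filter_add_sum_filter_not (univ : Finset (Fin n' × Fin n'))
    (fun ij => 2 * k ≤ (colS M ij.1 ij.2).card) (fun ij => bOnes M ij.1 ij.2)]
  rw [← Finset.sum_filter_add_sum_filter_not
    ((univ : Finset (Fin n' × Fin n')).filter
      (fun ij => ¬ 2 * k ≤ (colS M ij.1 ij.2).card))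
    (fun ij => 2 * k ≤ (rowS M ij.1 ij.2).card) (fun ij => bOnes M ij.1 ij.2)]
  have hB' : ∑ ij ∈ ((univ : Finset (Fin n' × Fin n')).filter
      (fun ij => ¬ 2 * k ≤ (colS M ij.1 ij.2).card)).filter
      (fun ij => 2 * k ≤ (rowS M ij.1 ij.2).card), bOnes M ij.1 ij.2
      ≤ n' * (s * s) * fExt s (rot90 π) := by
    refine le_trans (Finset.sum_le_sum_of_subset ?_) hB
    intro x hx
    obtain ⟨h1, h2⟩ := Finset.mem_filter.1 hx
    exact Finset.mem_filter.2 ⟨mem_univ _, h2⟩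
  omega


/-- For a length-`k` permutation matrix `π` with 90-degree rotation `π'` and
`n = 4k²·n'`:
`ex(n,π) ≤ (2k−1)² · ex(n/(4k²), π) + 4nk² · f(4k²,π) + 4nk² · f(4k²,π')`. -/
theorem stmt2 (k : ℕ) (hk : 1 ≤ k) (π : Fin k → Fin k → Bool) (hπ : isPermMat π)
    (n n' : ℕ) (hn' : 0 < n') (hn : n = 4 * k ^ 2 * n') :
    exN n π ≤ (2 * k - 1) ^ 2 * exN n' π
      + 4 * n * k ^ 2 * fExt (4 * k ^ 2) π
      + 4 * n * k ^ 2 * fExt (4 * k ^ 2) (rot90 π) := by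
  subst hn
  obtain ⟨σ, hσ⟩ := hπ
  have hs : 0 < 4 * k ^ 2 := by positivity
  show exRC (4 * k ^ 2 * n') (4 * k ^ 2 * n') π ≤ _
  apply exRC_le (⟨0, hk⟩ : Fin k) (σ ⟨0, hk⟩) ((hσ _ _).2 rfl)
  intro M hM
  refine le_trans (main_bound (s := 4 * k ^ 2) (n' := n') hk hs σ hσ M hM) ?_
  have e : n' * (4 * k ^ 2 * (4 * k ^ 2)) = 4 * (4 * k ^ 2 * n') * k ^ 2 := by ring
  rw [e]
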